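/- arXiv:1312.7638 — 3 statements merged into one kernel-verified Lean document; each statement's English description precedes it below -/
import Mathlib

section
/- For a bounded continuous function φ : ℝ → ℝ and β > 0, the function y = Z_β φ is differentiable and satisfies the linear ODE y'(t) = -β y(t) + φ(t) for all t ∈ ℝ. -/
open MeasureTheory Real Filter

noncomputable def Z (β : ℝ) (φ : ℝ → ℝ) (t : ℝ) : ℝ :=
  ∫ τ in Set.Iic t, Real.exp (-β * (t - τ)) * φ τ

/-!
Pulling the factor `exp (-β t)` out of the integral gives
`Z β φ t = exp (-β t) * ∫_{-∞}^t exp (β τ) φ τ dτ`. The integrand is continuous and integrable on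
every half-line `(-∞, t]` (it is dominated by `C exp (β τ)`), so by the fundamental theorem of
calculus the second factor has derivative `exp (β t) φ t`, and the product rule gives the ODE.
-/

theorem hasDerivAt_setIntegral_Iic {E : Type*} [NormedAddCommGroup E] [NormedSpace ℝ E]
    [CompleteSpace E] {g : ℝ → E} (hg : Continuous g) (hint : ∀ s, IntegrableOn g (Set.Iic s))
    (t : ℝ) : HasDerivAt (fun s => ∫ τ in Set.Iic s, g τ) (g t) t := by
  have hsplit : (fun s => ∫ τ in Set.Iic s, g τ) =
      fun s => (∫ τ in Set.Iic 0, g τ) + ∫ τ in (0 : ℝ)..s, g τ := by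
    ext s
    rw [← intervalIntegral.integral_Iic_sub_Iic (hint 0) (hint s), add_sub_cancel]
  rw [hsplit]
  exact (intervalIntegral.integral_hasDerivAt_right (hg.intervalIntegrable 0 t)
    hg.aestronglyMeasurable.stronglyMeasurableAtFilter hg.continuousAt).const_add _

theorem integrableOn_exp_mul_mul_Iic {β : ℝ} (hβ : 0 < β) {φ : ℝ → ℝ} (hφc : Continuous φ)
    {C : ℝ} (hC : ∀ t, |φ t| ≤ C) (s : ℝ) :
    IntegrableOn (fun τ => exp (β * τ) * φ τ) (Set.Iic s) := by
  refine ((integrableOn_exp_mul_Iic hβ s).mul_const C).mono'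
    (by fun_prop : Continuous fun τ => exp (β * τ) * φ τ).aestronglyMeasurable.restrict ?_
  filter_upwards with τ
  rw [norm_mul, norm_of_nonneg (exp_pos _).le, norm_eq_abs]
  exact mul_le_mul_of_nonneg_left (hC τ) (exp_pos _).le

theorem Z_eq_exp_mul_setIntegral (β : ℝ) (φ : ℝ → ℝ) (t : ℝ) :
    Z β φ t = exp (-β * t) * ∫ τ in Set.Iic t, exp (β * τ) * φ τ := by
  rw [Z, ← integral_const_mul]
  congr 1 with τ
  rw [← mul_assoc, ← exp_add]
  ring_nf

theorem stmt1 (φ : ℝ → ℝ) (hφc : Continuous φ) (hφb : ∃ C, ∀ t, |φ t| ≤ C)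
    (β : ℝ) (hβ : 0 < β) :
    ∀ t, HasDerivAt (Z β φ) (-β * Z β φ t + φ t) t := by
  obtain ⟨C, hC⟩ := hφb
  intro t
  have hF := hasDerivAt_setIntegral_Iic (by fun_prop)
    (integrableOn_exp_mul_mul_Iic hβ hφc hC) t
  have hexp : HasDerivAt (fun s => exp (-β * s)) (exp (-β * t) * -β) t := by
    simpa using ((hasDerivAt_id t).const_mul (-β)).exp
  have hZ : Z β φ = fun s => exp (-β * s) * ∫ τ in Set.Iic s, exp (β * τ) * φ τ :=
    funext (Z_eq_exp_mul_setIntegral β φ)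
  rw [Z_eq_exp_mul_setIntegral, hZ]
  refine (hexp.mul hF).congr_deriv ?_
  have hcancel : exp (-β * t) * exp (β * t) = 1 := by rw [← exp_add]; simp
  linear_combination φ t * hcancel
end

section
/- Let β_κ, β_λ > 0, ω ≠ 0, φ_μ(t) = cos(ω t), φ_ρ(t) = cos(ω t + ϕ). Then the long-time average of φ_ρ · Z_{β_λ}(Z_{β_κ} φ_μ) equals ((β_κ β_λ − ω²) cos ϕ − ω(β_κ + β_λ) sin ϕ) / (2(β_κ² + ω²)(β_λ² + ω²)). -/
open MeasureTheory Real Filter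

/-!
On sinusoids of frequency `ω`, `Z_β` is the bounded inverse of `d/dt + β`: a bounded `ψ` with
`ψ' + β ψ = φ` equals `Z_β φ`, because `e^{-β(t-τ)} ψ(τ)` is an antiderivative of the integrand
that vanishes at `-∞`. Hence `Z_β` maps `a cos ωt + b sin ωt` to the sinusoid with complex
amplitude `(a + ib) / (β - iω)`. After two applications, product-to-sum turns
`cos(ωt + ϕ) (p cos ωt + q sin ωt)` into the constant `(p cos ϕ - q sin ϕ) / 2` plus an
oscillation of frequency `2ω` with bounded primitive, so the long-time average is that constant.
-/

open Set intervalIntegral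
open scoped Topology

section ExponentialMemory

variable {β : ℝ}

lemma tendsto_exp_neg_mul_sub_atBot (hβ : 0 < β) (t : ℝ) :
    Tendsto (fun τ => exp (-β * (t - τ))) atBot (𝓝 0) := by
  refine tendsto_exp_atBot.comp ?_
  have : Tendsto (fun τ : ℝ => β * τ) atBot atBot :=
    (tendsto_const_mul_atBot_of_pos hβ).mpr tendsto_id
  convert tendsto_atBot_add_const_right _ (-β * t) this using 1
  funext τ
  ring

lemma integrableOn_exp_neg_mul_sub_mul_Iic (hβ : 0 < β) (t : ℝ) {φ : ℝ → ℝ} {C : ℝ}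
    (hφ : Continuous φ) (hφC : ∀ τ, |φ τ| ≤ C) :
    IntegrableOn (fun τ => exp (-β * (t - τ)) * φ τ) (Iic t) := by
  have hexp : IntegrableOn (fun τ => exp (-β * (t - τ))) (Iic t) := by
    have hsplit : (fun τ => exp (-β * (t - τ))) = fun τ => exp (β * τ) * exp (-β * t) := by
      funext τ
      rw [← exp_add]
      ring_nf
    rw [hsplit]
    exact (integrableOn_exp_mul_Iic hβ t).mul_const _
  exact hexp.mul_bdd hφ.aestronglyMeasurable (Eventually.of_forall hφC)

lemma Z_eq_of_hasDerivAt (hβ : 0 < β) {φ ψ : ℝ → ℝ} {C D : ℝ}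
    (hψ : ∀ τ, HasDerivAt ψ (φ τ - β * ψ τ) τ) (hψD : ∀ τ, |ψ τ| ≤ D)
    (hφ : Continuous φ) (hφC : ∀ τ, |φ τ| ≤ C) (t : ℝ) :
    Z β φ t = ψ t := by
  have hderiv : ∀ τ, HasDerivAt (fun τ => exp (-β * (t - τ)) * ψ τ)
      (exp (-β * (t - τ)) * φ τ) τ := by
    intro τ
    have hexp : HasDerivAt (fun τ => exp (-β * (t - τ))) (exp (-β * (t - τ)) * β) τ := by
      simpa using (((hasDerivAt_id τ).const_sub t).const_mul (-β)).exp
    exact (hexp.mul (hψ τ)).congr_deriv (by ring)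
  have hlim : Tendsto (fun τ => exp (-β * (t - τ)) * ψ τ) atBot (𝓝 0) :=
    (tendsto_exp_neg_mul_sub_atBot hβ t).zero_mul_isBoundedUnder_le
      ⟨D, eventually_map.2 (Eventually.of_forall hψD)⟩
  rw [Z, integral_Iic_of_hasDerivAt_of_tendsto' (fun τ _ => hderiv τ)
    (integrableOn_exp_neg_mul_sub_mul_Iic hβ t hφ hφC) hlim]
  simp

end ExponentialMemory

lemma abs_mul_cos_add_mul_sin_le (a b x y : ℝ) : |a * cos x + b * sin y| ≤ |a| + |b| := by
  calc |a * cos x + b * sin y| ≤ |a| * |cos x| + |b| * |sin y| := by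
        simpa only [abs_mul] using abs_add_le (a * cos x) (b * sin y)
    _ ≤ |a| * 1 + |b| * 1 := by gcongr <;> simp [abs_cos_le_one, abs_sin_le_one]
    _ = |a| + |b| := by ring

noncomputable def sinusoid (ω a b t : ℝ) : ℝ := a * cos (ω * t) + b * sin (ω * t)

lemma abs_sinusoid_le (ω a b t : ℝ) : |sinusoid ω a b t| ≤ |a| + |b| :=
  abs_mul_cos_add_mul_sin_le a b _ _

lemma continuous_sinusoid (ω a b : ℝ) : Continuous (sinusoid ω a b) := by
  unfold sinusoid
  fun_prop

lemma hasDerivAt_sinusoid (ω a b t : ℝ) :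
    HasDerivAt (sinusoid ω a b) (sinusoid ω (b * ω) (-(a * ω)) t) t := by
  have hωt : HasDerivAt (fun t => ω * t) ω t := by simpa using (hasDerivAt_id t).const_mul ω
  refine ((((hasDerivAt_cos _).comp t hωt).const_mul a).add
    (((hasDerivAt_sin _).comp t hωt).const_mul b)).congr_deriv ?_
  simp only [sinusoid]
  ring

lemma Z_sinusoid {β : ℝ} (hβ : 0 < β) (ω a b : ℝ) :
    Z β (sinusoid ω a b) =
      sinusoid ω ((a * β - b * ω) / (β ^ 2 + ω ^ 2)) ((a * ω + b * β) / (β ^ 2 + ω ^ 2)) := by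
  have hD : β ^ 2 + ω ^ 2 ≠ 0 := by positivity
  funext t
  refine Z_eq_of_hasDerivAt hβ (fun τ => (hasDerivAt_sinusoid ω _ _ τ).congr_deriv ?_)
    (abs_sinusoid_le ω _ _) (continuous_sinusoid ω a b) (abs_sinusoid_le ω a b) t
  simp only [sinusoid]
  field_simp
  ring

lemma cos_add_mul_sinusoid (ω ϕ p q t : ℝ) :
    cos (ω * t + ϕ) * sinusoid ω p q t
      = (p * cos ϕ - q * sin ϕ) / 2
        + (p * cos (2 * (ω * t) + ϕ) + q * sin (2 * (ω * t) + ϕ)) / 2 := by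
  have hangle : 2 * (ω * t) + ϕ = ω * t + (ω * t + ϕ) := by ring
  rw [sinusoid, hangle, cos_add (ω * t) (ω * t + ϕ), sin_add (ω * t) (ω * t + ϕ), cos_add (ω * t) ϕ,
    sin_add (ω * t) ϕ]
  linear_combination ((p * cos ϕ - q * sin ϕ) / 2) * sin_sq_add_cos_sq (ω * t)

lemma tendsto_average_of_hasDerivAt {f F : ℝ → ℝ} {L C : ℝ}
    (hF : ∀ t, HasDerivAt F (f t) t) (hf : Continuous f) (hFC : ∀ t, |F t - L * t| ≤ C) :
    Tendsto (fun T => (1 / T) * ∫ t in (0 : ℝ)..T, f t) atTop (𝓝 L) := by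
  have hdecay : Tendsto (fun T => T⁻¹ * (F T - L * T - F 0)) atTop (𝓝 0) := by
    refine tendsto_inv_atTop_zero.zero_mul_isBoundedUnder_le ⟨C + |F 0|, ?_⟩
    refine eventually_map.2 (Eventually.of_forall fun T => ?_)
    exact (abs_sub _ _).trans (add_le_add (hFC T) le_rfl)
  refine (by simpa using hdecay.const_add L : Tendsto _ atTop (𝓝 L)).congr' ?_
  filter_upwards [eventually_ne_atTop 0] with T hT
  rw [integral_eq_sub_of_hasDerivAt (fun t _ => hF t) (hf.intervalIntegrable _ _)]
  field_simp
  ring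

lemma tendsto_average_cos_mul_sinusoid {ω : ℝ} (hω : ω ≠ 0) (ϕ p q : ℝ) :
    Tendsto (fun T => (1 / T) * ∫ t in (0 : ℝ)..T, cos (ω * t + ϕ) * sinusoid ω p q t)
      atTop (𝓝 ((p * cos ϕ - q * sin ϕ) / 2)) := by
  set L := (p * cos ϕ - q * sin ϕ) / 2
  let F : ℝ → ℝ := fun t => L * t + (p * sin (2 * ω * t + ϕ) - q * cos (2 * ω * t + ϕ)) / (4 * ω)
  have hF : ∀ t, HasDerivAt F (cos (ω * t + ϕ) * sinusoid ω p q t) t := by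
    intro t
    have harg : HasDerivAt (fun t => 2 * ω * t + ϕ) (2 * ω) t := by
      simpa using ((hasDerivAt_id t).const_mul (2 * ω)).add_const ϕ
    have hosc := (((hasDerivAt_sin _).comp t harg).const_mul p).sub
      (((hasDerivAt_cos _).comp t harg).const_mul q)
    refine (((hasDerivAt_id t).const_mul L).add (hosc.div_const (4 * ω))).congr_deriv ?_
    rw [cos_add_mul_sinusoid, show 2 * (ω * t) = 2 * ω * t by ring]
    field_simp
    ring
  have hf : Continuous fun t => cos (ω * t + ϕ) * sinusoid ω p q t :=
    (continuous_cos.comp (by fun_prop)).mul (continuous_sinusoid ω p q)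
  refine tendsto_average_of_hasDerivAt hF hf (C := (|p| + |q|) / |4 * ω|) fun t => ?_
  rw [show F t - L * t = (-q * cos (2 * ω * t + ϕ) + p * sin (2 * ω * t + ϕ)) / (4 * ω) by ring,
    abs_div]
  gcongr
  simpa [abs_neg, add_comm] using abs_mul_cos_add_mul_sin_le (-q) p (2 * ω * t + ϕ) (2 * ω * t + ϕ)

theorem stmt8 (bk bl ω ϕ : ℝ) (hbk : 0 < bk) (hbl : 0 < bl) (hω : ω ≠ 0) :
    Tendsto (fun T : ℝ =>
        (1 / T) * ∫ t in (0:ℝ)..T,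
          Real.cos (ω * t + ϕ) * Z bl (Z bk (fun s => Real.cos (ω * s))) t)
      atTop
      (nhds (((bk * bl - ω ^ 2) * Real.cos ϕ - ω * (bk + bl) * Real.sin ϕ)
        / (2 * (bk ^ 2 + ω ^ 2) * (bl ^ 2 + ω ^ 2)))) := by
  have hcos : (fun s => cos (ω * s)) = sinusoid ω 1 0 := by
    funext s
    simp [sinusoid]
  rw [hcos, Z_sinusoid hbk, Z_sinusoid hbl]
  convert tendsto_average_cos_mul_sinusoid hω ϕ _ _ using 2
  have hk : bk ^ 2 + ω ^ 2 ≠ 0 := by positivity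
  have hl : bl ^ 2 + ω ^ 2 ≠ 0 := by positivity
  field_simp
  ring
end

section
/- For the linear diffusion equation u_t = u_xx on the element [−H, H] with boundary conditions u(−H,t) = u(0,t) = u(H,t), every solution expressible as a finite linear combination of the modes {1, sin(kθ) (k ≥ 1), cos(kθ) (even k ≥ 2), θ sin(kθ) (even k ≥ 2)} (θ = πx/H) converges, as t → ∞, to its constant component at exponential rate at least β₁ = π²/H²: writing u(x,t) = U + w(x,t) with U the coefficient of the constant mode, one has sup_x |w(x,t)| ≤ C(1 + t) e^{−π² t/H²}. -/
/-!
Since `u(·, t) - U` stays in the finite-dimensional span `V` of the modes and `d²/dx²` maps `V`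
into itself, the heat equation is a linear ODE on `V` (evaluation at finitely many points embeds
`V` into some `ℝˢ`), so a solution is determined by its initial value. Every mode is a generalised
eigenfunction: `sin kθ` and `cos kθ` have eigenvalue `-(kπ/H)²`, while
`(θ sin kθ)'' = -(kπ/H)² θ sin kθ + (2kπ²/H²) cos kθ`, so the solution starting from `θ sin kθ`
is `e^{-(kπ/H)² t} (θ sin kθ + (2kπ²/H²) t cos kθ)`. All of these are `O((1 + t) e^{-π² t/H²})`
on `[-H, H]`, hence so is every linear combination.
-/

open Real Set

section PointwiseSolutions

variable {X : Type*} {V : Submodule ℝ (X → ℝ)} (A : V →ₗ[ℝ] V)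

def IsPointwiseSolution (c : ℝ → V) : Prop :=
  ∀ x t, HasDerivAt (fun s => (c s : X → ℝ) x) ((A (c t) : X → ℝ) x) t

variable {A}

namespace IsPointwiseSolution

theorem zero : IsPointwiseSolution A 0 := fun x t => by
  simpa using hasDerivAt_const t (0 : ℝ)

theorem add {c d : ℝ → V} (hc : IsPointwiseSolution A c) (hd : IsPointwiseSolution A d) :
    IsPointwiseSolution A (c + d) := fun x t => by
  simpa using (hc x t).fun_add (hd x t)

theorem const_smul {c : ℝ → V} (hc : IsPointwiseSolution A c) (r : ℝ) :
    IsPointwiseSolution A (r • c) := fun x t => by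
  simpa using (hc x t).const_mul r

end IsPointwiseSolution

theorem isPointwiseSolution_exp_smul {p q : V} {μ : ℝ} (hp : A p = μ • p + q)
    (hq : A q = μ • q) : IsPointwiseSolution A fun t => exp (μ * t) • (p + t • q) := by
  intro x t
  have h := ((hasDerivAt_id t).const_mul μ).exp.fun_mul
    (((hasDerivAt_id t).mul_const ((q : X → ℝ) x)).const_add ((p : X → ℝ) x))
  simp only [map_smul, map_add, hp, hq, Submodule.coe_smul, Submodule.coe_add, Pi.smul_apply,
    Pi.add_apply, smul_eq_mul, id] at h ⊢
  exact h.congr_deriv (by ring)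

theorem exists_finset_injective_pi_of_separating {R M X : Type*} [Ring R] [AddCommGroup M] [Module R M]
    [IsArtinian R M] (φ : X → M →ₗ[R] R) (hφ : ∀ v, (∀ x, φ x v = 0) → v = 0) :
    ∃ s : Finset X, Function.Injective (LinearMap.pi fun x : s => φ x) := by
  classical
  obtain ⟨_, ⟨s, rfl⟩, hmin⟩ := IsArtinian.set_has_minimal
    (Set.range fun s : Finset X => LinearMap.ker (LinearMap.pi fun x : s => φ x)) (range_nonempty _)
  refine ⟨s, LinearMap.ker_eq_bot.1 (eq_bot_iff.2 fun v hv => hφ v fun x => ?_)⟩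
  have hle : LinearMap.ker (LinearMap.pi fun y : (insert x s : Finset X) => φ y) ≤
      LinearMap.ker (LinearMap.pi fun y : s => φ y) := fun w hw => by
    simp only [LinearMap.mem_ker, funext_iff, LinearMap.pi_apply] at hw ⊢
    exact fun y => hw ⟨y, Finset.mem_insert_of_mem y.2⟩
  rw [← (hle.lt_or_eq.resolve_left (hmin _ ⟨_, rfl⟩))] at hv
  exact congrFun hv ⟨x, Finset.mem_insert_self x s⟩

theorem IsPointwiseSolution.unique [FiniteDimensional ℝ V] {c d : ℝ → V}
    (hc : IsPointwiseSolution A c) (hd : IsPointwiseSolution A d) (h0 : c 0 = d 0) : c = d := by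
  obtain ⟨s, hs⟩ :=
    exists_finset_injective_pi_of_separating (fun x => LinearMap.proj x ∘ₗ V.subtype)
      fun v hv => Subtype.ext (funext hv)
  set E := LinearMap.pi fun x : s => LinearMap.proj (x : X) ∘ₗ V.subtype
  obtain ⟨P, hP⟩ := E.exists_leftInverse_of_injective (LinearMap.ker_eq_bot.2 hs)
  let B : (s → ℝ) →L[ℝ] (s → ℝ) := LinearMap.toContinuousLinearMap (E ∘ₗ A ∘ₗ P)
  have hB (f : V) : B (E f) = E (A f) := by
    simp [B, ← LinearMap.comp_apply P E, hP]
  have hE {c : ℝ → V} (hc : IsPointwiseSolution A c) t : HasDerivAt (E ∘ c) (B ((E ∘ c) t)) t := by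
    rw [Function.comp_apply, hB, hasDerivAt_pi]
    exact fun x => hc x t
  exact hs.comp_left (ODE_solution_unique_univ (v := fun _ => B) (s := fun _ => univ)
    (fun _ => B.lipschitz.lipschitzOnWith) (fun t => ⟨hE hc t, trivial⟩)
    (fun t => ⟨hE hd t, trivial⟩) (congrArg E h0))

variable (A) in
def decayingInitialValues (s : Set X) (ν : ℝ) : Submodule ℝ V where
  carrier := {f | ∃ c : ℝ → V, c 0 = f ∧ IsPointwiseSolution A c ∧
    ∃ K, ∀ t ≥ 0, ∀ x ∈ s, |(c t : X → ℝ) x| ≤ K * (1 + t) * exp (ν * t)}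
  zero_mem' := ⟨0, rfl, .zero, 0, fun t _ x _ => by simp⟩
  add_mem' := by
    rintro _ _ ⟨c, rfl, hc, K, hK⟩ ⟨d, rfl, hd, L, hL⟩
    refine ⟨c + d, rfl, hc.add hd, K + L, fun t ht x hx => ?_⟩
    calc |((c + d) t : X → ℝ) x| ≤ |(c t : X → ℝ) x| + |(d t : X → ℝ) x| := abs_add_le _ _
      _ ≤ _ := by linarith [hK t ht x hx, hL t ht x hx]
  smul_mem' := by
    rintro r _ ⟨c, rfl, hc, K, hK⟩
    refine ⟨r • c, rfl, hc.const_smul r, |r| * K, fun t ht x hx => ?_⟩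
    calc |((r • c) t : X → ℝ) x| = |r| * |(c t : X → ℝ) x| := by simp [abs_mul]
      _ ≤ |r| * (K * (1 + t) * exp (ν * t)) := by gcongr; exact hK t ht x hx
      _ = _ := by ring

theorem mem_decayingInitialValues_of_generalizedEigen {s : Set X} {ν μ M : ℝ} {p q : V}
    (hp : A p = μ • p + q) (hq : A q = μ • q) (hμ : μ ≤ ν)
    (hM : ∀ x ∈ s, |(p : X → ℝ) x| ≤ M ∧ |(q : X → ℝ) x| ≤ M) :
    p ∈ decayingInitialValues A s ν := by
  refine ⟨_, by simp, isPointwiseSolution_exp_smul hp hq, M, fun t ht x hx => ?_⟩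
  obtain ⟨hpM, hqM⟩ := hM x hx
  calc |((exp (μ * t) • (p + t • q) : V) : X → ℝ) x|
      = exp (μ * t) * |(p : X → ℝ) x + t * (q : X → ℝ) x| := by
        simp [← mul_add, abs_mul, abs_of_pos (exp_pos _)]
    _ ≤ exp (μ * t) * (M + t * M) := by
      gcongr
      calc _ ≤ |(p : X → ℝ) x| + |t * (q : X → ℝ) x| := abs_add_le _ _
        _ ≤ M + t * M := by rw [abs_mul, abs_of_nonneg ht]; gcongr
    _ ≤ exp (ν * t) * (M + t * M) := by
      gcongr
      nlinarith [(abs_nonneg _).trans hpM]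
    _ = M * (1 + t) * exp (ν * t) := by ring

end PointwiseSolutions

theorem contDiff_of_mem_span {𝕜 E F : Type*} [NontriviallyNormedField 𝕜] [NormedAddCommGroup E]
    [NormedSpace 𝕜 E] [NormedAddCommGroup F] [NormedSpace 𝕜 F] {n : WithTop ℕ∞}
    {S : Set (E → F)} (hS : ∀ f ∈ S, ContDiff 𝕜 n f) {f : E → F}
    (hf : f ∈ Submodule.span 𝕜 S) : ContDiff 𝕜 n f := by
  induction hf using Submodule.span_induction with
  | mem f hf => exact hS f hf
  | zero => exact contDiff_const
  | add f g _ _ hf hg => exact hf.add hg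
  | smul a f _ hf => exact hf.const_smul a

theorem exists_linearMap_iteratedDeriv {𝕜 F : Type*} [NontriviallyNormedField 𝕜]
    [NormedAddCommGroup F] [NormedSpace 𝕜 F] {n : ℕ} {S : Set (𝕜 → F)}
    (hS : ∀ f ∈ S, ContDiff 𝕜 n f ∧ iteratedDeriv n f ∈ Submodule.span 𝕜 S) :
    ∃ A : Submodule.span 𝕜 S →ₗ[𝕜] Submodule.span 𝕜 S,
      ∀ f, (A f : 𝕜 → F) = iteratedDeriv n f := by
  have hsmooth (f : Submodule.span 𝕜 S) : ContDiff 𝕜 n (f : 𝕜 → F) :=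
    contDiff_of_mem_span (fun g hg => (hS g hg).1) f.2
  let D : Submodule.span 𝕜 S →ₗ[𝕜] (𝕜 → F) :=
    { toFun f := iteratedDeriv n f
      map_add' f g := funext fun x =>
        iteratedDeriv_add (hsmooth f).contDiffAt (hsmooth g).contDiffAt
      map_smul' r f := funext fun x => iteratedDeriv_const_smul (hsmooth f).contDiffAt r }
  have hD : LinearMap.range D ≤ Submodule.span 𝕜 S := by
    rw [LinearMap.range_eq_map, ← Submodule.span_span_coe_preimage, Submodule.map_span_le]
    exact fun f hf => (hS f hf).2
  exact ⟨D.codRestrict _ fun f => hD ⟨f, rfl⟩, fun f => rfl⟩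

theorem iteratedDeriv_two_sin_mul (b : ℝ) :
    iteratedDeriv 2 (fun x => sin (b * x)) = -b ^ 2 • fun x => sin (b * x) := by
  rw [iteratedDeriv_comp_const_mul contDiff_sin]
  ext x; simp

theorem iteratedDeriv_two_cos_mul (b : ℝ) :
    iteratedDeriv 2 (fun x => cos (b * x)) = -b ^ 2 • fun x => cos (b * x) := by
  rw [iteratedDeriv_comp_const_mul contDiff_cos]
  ext x; simp

theorem iteratedDeriv_two_mul_sin_mul (a b : ℝ) :
    iteratedDeriv 2 (fun x => a * x * sin (b * x)) =
      -b ^ 2 • (fun x => a * x * sin (b * x)) + (2 * a * b) • fun x => cos (b * x) := by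
  ext x
  rw [iteratedDeriv_fun_mul (by fun_prop) (by fun_prop)]
  simp [Finset.sum_range_succ, iteratedDeriv_comp_const_mul contDiff_sin, iteratedDeriv_succ]
  ring

def heatModes (H : ℝ) (N : ℕ) : Set (ℝ → ℝ) :=
  {f : ℝ → ℝ | ∃ k : ℕ, 1 ≤ k ∧ k ≤ N ∧
    ((f = fun x => sin (k * π * x / H)) ∨
     (Even k ∧ f = fun x => cos (k * π * x / H)) ∨
     (Even k ∧ f = fun x => π * x / H * sin (k * π * x / H)))}

theorem heatModes_finite (H : ℝ) (N : ℕ) : (heatModes H N).Finite := by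
  refine ((finite_Iic N).biUnion fun k _ => toFinite
    {fun x => sin (k * π * x / H), fun x => cos (k * π * x / H),
      fun x => π * x / H * sin (k * π * x / H)}).subset ?_
  rintro f ⟨k, -, hk, hf | ⟨-, hf⟩ | ⟨-, hf⟩⟩ <;> exact mem_biUnion hk (by simp [hf])

theorem contDiff_of_mem_heatModes {H : ℝ} {N : ℕ} {f : ℝ → ℝ} (hf : f ∈ heatModes H N) :
    ContDiff ℝ 2 f := by
  obtain ⟨k, -, -, rfl | ⟨-, rfl⟩ | ⟨-, rfl⟩⟩ := hf <;> fun_prop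

theorem abs_pi_mul_div_le {H x : ℝ} (hH : 0 < H) (hx : x ∈ Icc (-H) H) : |π * x / H| ≤ π := by
  rw [abs_div, abs_mul, abs_of_pos pi_pos, abs_of_pos hH, div_le_iff₀ hH]
  gcongr
  exact abs_le.2 hx

theorem heatModes_generalizedEigen {H : ℝ} (hH : 0 < H) {N : ℕ} {f : ℝ → ℝ}
    (hf : f ∈ heatModes H N) :
    ∃ μ ≤ -(π / H) ^ 2, ∃ q ∈ Submodule.span ℝ (heatModes H N),
      iteratedDeriv 2 f = μ • f + q ∧ iteratedDeriv 2 q = μ • q ∧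
      ∃ M, ∀ x ∈ Icc (-H) H, |f x| ≤ M ∧ |q x| ≤ M := by
  obtain ⟨k, hk1, hkN, rfl | ⟨hk, rfl⟩ | ⟨hk, rfl⟩⟩ := hf
  all_goals
    set b := (k : ℝ) * π / H
    have hθ (x : ℝ) : k * π * x / H = b * x := by ring
    have hμ : -b ^ 2 ≤ -(π / H) ^ 2 := neg_le_neg <| pow_le_pow_left₀ (by positivity)
      (div_le_div_of_nonneg_right (le_mul_of_one_le_left pi_pos.le (mod_cast hk1)) hH.le) 2
    simp_rw [hθ]
  · refine ⟨-b ^ 2, hμ, 0, zero_mem _, by simpa using iteratedDeriv_two_sin_mul b,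
      by ext; simp, 1, fun x _ => ⟨abs_sin_le_one _, by simp⟩⟩
  · refine ⟨-b ^ 2, hμ, 0, zero_mem _, by simpa using iteratedDeriv_two_cos_mul b,
      by ext; simp, 1, fun x _ => ⟨abs_cos_le_one _, by simp⟩⟩
  · have hcos : (fun x => cos (b * x)) ∈ heatModes H N :=
      ⟨k, hk1, hkN, Or.inr (Or.inl ⟨hk, by simp_rw [hθ]⟩)⟩
    have hsin : (fun x => π * x / H * sin (b * x)) = fun x => π / H * x * sin (b * x) := by
      ext x; ring
    have hb0 : 0 ≤ 2 * (π / H) * b := by positivity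
    refine ⟨-b ^ 2, hμ, (2 * (π / H) * b) • fun x => cos (b * x),
      Submodule.smul_mem _ _ (Submodule.subset_span hcos), ?_, ?_, π + 2 * (π / H) * b,
      fun x hx => ⟨?_, ?_⟩⟩
    · rw [hsin, iteratedDeriv_two_mul_sin_mul]
    · ext x
      simp [iteratedDeriv_const_smul_field, iteratedDeriv_two_cos_mul]
      ring
    · calc |π * x / H * sin (b * x)| ≤ π * 1 := by
            rw [abs_mul]; gcongr
            exacts [abs_pi_mul_div_le hH hx, abs_sin_le_one _]
        _ ≤ _ := by linarith
    · calc |((2 * (π / H) * b) • fun x => cos (b * x)) x| ≤ 2 * (π / H) * b * 1 := by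
            simp only [Pi.smul_apply, smul_eq_mul, abs_mul, abs_of_nonneg hb0]
            gcongr; exact abs_cos_le_one _
        _ ≤ _ := by linarith [pi_pos]

theorem iteratedDeriv_two_mem_span_heatModes {H : ℝ} (hH : 0 < H) {N : ℕ} {f : ℝ → ℝ}
    (hf : f ∈ heatModes H N) : iteratedDeriv 2 f ∈ Submodule.span ℝ (heatModes H N) := by
  obtain ⟨μ, -, q, hq, hf₂, -⟩ := heatModes_generalizedEigen hH hf
  rw [hf₂]
  exact add_mem (Submodule.smul_mem _ _ (Submodule.subset_span hf)) hq

theorem decayingInitialValues_heatModes_eq_top {H : ℝ} (hH : 0 < H) {N : ℕ}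
    {A : Submodule.span ℝ (heatModes H N) →ₗ[ℝ] Submodule.span ℝ (heatModes H N)}
    (hA : ∀ f, (A f : ℝ → ℝ) = iteratedDeriv 2 f) :
    decayingInitialValues A (Icc (-H) H) (-(π / H) ^ 2) = ⊤ := by
  rw [eq_top_iff, ← Submodule.span_span_coe_preimage, Submodule.span_le]
  intro p hp
  obtain ⟨μ, hμ, q, hq, hp₂, hq₂, M, hM⟩ := heatModes_generalizedEigen hH hp
  exact mem_decayingInitialValues_of_generalizedEigen (q := ⟨q, hq⟩)
    (Subtype.ext (by rw [hA, hp₂]; rfl)) (Subtype.ext (by rw [hA]; exact hq₂)) hμ hM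

theorem stmt15_general (H : ℝ) (hH : 0 < H) (N : ℕ) (U : ℝ) (u : ℝ → ℝ → ℝ)
    (heq : ∀ x t : ℝ, HasDerivAt (fun s => u x s)
      (deriv (deriv (fun y => u y t)) x) t)
    (hspan : ∀ t : ℝ, (fun x => u x t - U) ∈ Submodule.span ℝ
      {f : ℝ → ℝ | ∃ k : ℕ, 1 ≤ k ∧ k ≤ N ∧
        ((f = fun x => Real.sin ((k : ℝ) * Real.pi * x / H)) ∨
         (Even k ∧ f = fun x => Real.cos ((k : ℝ) * Real.pi * x / H)) ∨
         (Even k ∧ f = fun x => (Real.pi * x / H) * Real.sin ((k : ℝ) * Real.pi * x / H)))}) :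
    ∃ C : ℝ, ∀ t ≥ (0:ℝ), ∀ x ∈ Set.Icc (-H) H,
      |u x t - U| ≤ C * (1 + t) * Real.exp (-Real.pi ^ 2 * t / H ^ 2) := by
  have := FiniteDimensional.span_of_finite ℝ (heatModes_finite H N)
  obtain ⟨A, hA⟩ := exists_linearMap_iteratedDeriv fun f hf =>
    ⟨contDiff_of_mem_heatModes hf, iteratedDeriv_two_mem_span_heatModes hH hf⟩
  let c : ℝ → Submodule.span ℝ (heatModes H N) := fun t => ⟨fun x => u x t - U, hspan t⟩
  have hc : IsPointwiseSolution A c := fun x t => by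
    simpa [c, hA, iteratedDeriv_succ] using (heq x t).sub_const U
  obtain ⟨d, hd₀, hd, K, hK⟩ : c 0 ∈ decayingInitialValues A (Icc (-H) H) (-(π / H) ^ 2) := by
    rw [decayingInitialValues_heatModes_eq_top hH hA]
    trivial
  obtain rfl : d = c := hd.unique hc hd₀
  refine ⟨K, fun t ht x hx => ?_⟩
  convert hK t ht x hx using 3
  ring

theorem stmt15 (H : ℝ) (hH : 0 < H) (N : ℕ) (U : ℝ) (u : ℝ → ℝ → ℝ)
    (heq : ∀ x t : ℝ, HasDerivAt (fun s => u x s)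
      (deriv (deriv (fun y => u y t)) x) t)
    (hbc : ∀ t : ℝ, u (-H) t = u 0 t ∧ u H t = u 0 t)
    (hspan : ∀ t : ℝ, (fun x => u x t - U) ∈ Submodule.span ℝ
      {f : ℝ → ℝ | ∃ k : ℕ, 1 ≤ k ∧ k ≤ N ∧
        ((f = fun x => Real.sin ((k : ℝ) * Real.pi * x / H)) ∨
         (Even k ∧ f = fun x => Real.cos ((k : ℝ) * Real.pi * x / H)) ∨
         (Even k ∧ f = fun x => (Real.pi * x / H) * Real.sin ((k : ℝ) * Real.pi * x / H)))}) :
    ∃ C : ℝ, ∀ t ≥ (0:ℝ), ∀ x ∈ Set.Icc (-H) H,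
      |u x t - U| ≤ C * (1 + t) * Real.exp (-Real.pi ^ 2 * t / H ^ 2) :=
  stmt15_general H hH N U u heq hspan
end
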